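/- arXiv:2603.20065 — 2 statements merged into one kernel-verified Lean document; each statement's English description precedes it below -/
import Mathlib

section
/- Let a = π/2. For any C > 0 and any y' ∈ [0,1/2], we have ∫_ℝ ∫_0^1 F(x,y) dx dy ≤ C' y' where F(x,y) = C (y'/|z-z'|) e^{-a(x-x')} 1_{|z-z'| ≤ 1} + C y² y' e^{-π|x-x'|} e^{-a(x-x')} 1_{|z-z'| ≥ 1}, z = (x,y), z' = (x',y'), and C' depends only on C. -/
open MeasureTheory

/-- The infinite channel `ℝ × [0,1]` as a subset of `ℝ²`. -/
def channel : Set (ℝ × ℝ) := Set.univ ×ˢ Set.Icc (0:ℝ) 1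

/-- Euclidean norm on `ℝ × ℝ`. -/
noncomputable def enr (z : ℝ × ℝ) : ℝ := Real.sqrt (z.1 ^ 2 + z.2 ^ 2)

/-!
With `w = z - z'`, both terms are bounded pointwise by `C y'` times a fixed integrable kernel of
`w`, whose integral is then independent of `z'` by translation invariance. Near `z'`,
`|w.1| ≤ |w| ≤ 1` bounds the exponential by `e^{π/2}`, leaving `|w|⁻¹` on the unit disc, which is
integrable in the plane. Far from `z'`, `z.2 ≤ 1` and, because `π/2 < π`,
`e^{-π|w.1|} e^{-(π/2) w.1} ≤ e^{-(π/2)|w.1|}`; for `z` in the channel `w` lies in the strip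
`|w.2| ≤ 1`, on which this is integrable.
-/

open Real

lemma enr_nonneg (w : ℝ × ℝ) : 0 ≤ enr w := sqrt_nonneg _

lemma continuous_enr : Continuous enr := by
  unfold enr
  fun_prop

lemma norm_le_enr (w : ℝ × ℝ) : ‖w‖ ≤ enr w := by
  rw [Prod.norm_def, Real.norm_eq_abs, Real.norm_eq_abs, enr]
  refine max_le ?_ ?_ <;> rw [← Real.sqrt_sq_eq_abs] <;>
    exact Real.sqrt_le_sqrt (by nlinarith [sq_nonneg w.1, sq_nonneg w.2])

lemma abs_fst_le_enr (w : ℝ × ℝ) : |w.1| ≤ enr w :=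
  (le_max_left _ _).trans ((Prod.norm_def w).symm.le.trans (norm_le_enr w))

lemma integrable_exp_neg_mul_abs {c : ℝ} (hc : 0 < c) :
    Integrable fun s : ℝ => exp (-c * |s|) := by
  rw [← integrableOn_univ, ← Set.Iic_union_Ioi (a := (0 : ℝ))]
  refine IntegrableOn.union ?_ ?_
  · refine (integrableOn_exp_mul_Iic hc 0).congr_fun (fun s hs => ?_) measurableSet_Iic
    rw [abs_of_nonpos hs, neg_mul_neg]
  · refine (integrableOn_exp_mul_Ioi (neg_neg_of_pos hc) 0).congr_fun (fun s hs => ?_)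
      measurableSet_Ioi
    rw [abs_of_pos hs]

noncomputable def discKernel : ℝ × ℝ → ℝ :=
  {w : ℝ × ℝ | enr w ≤ 1}.indicator fun w => (enr w)⁻¹

lemma discKernel_nonneg (w : ℝ × ℝ) : 0 ≤ discKernel w :=
  Set.indicator_nonneg (fun w _ => inv_nonneg.2 (enr_nonneg w)) w

lemma integrable_discKernel : Integrable discKernel := by
  have hmeas : MeasurableSet {w : ℝ × ℝ | enr w ≤ 1} :=
    measurableSet_le continuous_enr.measurable measurable_const
  rw [discKernel, integrable_indicator_iff hmeas]
  have hdecay : ∀ w : ℝ × ℝ, ‖(enr w)⁻¹‖ ≤ 1 * ‖w‖ ^ (-1 : ℝ) := by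
    intro w
    rw [one_mul, Real.rpow_neg_one, Real.norm_eq_abs, abs_inv, abs_of_nonneg (enr_nonneg w)]
    rcases (norm_nonneg w).eq_or_lt with hw | hw
    · simp [norm_eq_zero.1 hw.symm, enr]
    · exact inv_anti₀ hw (norm_le_enr w)
  have hball : IntegrableOn (fun w : ℝ × ℝ => (enr w)⁻¹) (Metric.ball 0 2) :=
    integrableOn_ball_of_norm_le_rpow (by simp) (by simp)
      (Filter.Eventually.of_forall hdecay) continuous_enr.measurable.inv.aestronglyMeasurable
  refine hball.mono_set fun w hw => ?_
  rw [mem_ball_zero_iff]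
  exact (norm_le_enr w).trans_lt (lt_of_le_of_lt hw one_lt_two)

noncomputable def channelMajorant (w : ℝ × ℝ) : ℝ :=
  exp (π / 2) * discKernel w
    + exp (-(π / 2) * |w.1|) * (Set.Icc (-1 : ℝ) 1).indicator 1 w.2

lemma channelMajorant_nonneg (w : ℝ × ℝ) : 0 ≤ channelMajorant w := by
  unfold channelMajorant
  exact add_nonneg (mul_nonneg (exp_nonneg _) (discKernel_nonneg w))
    (mul_nonneg (exp_nonneg _) (Set.indicator_nonneg (fun _ _ => zero_le_one) _))

lemma integrable_channelMajorant : Integrable channelMajorant := by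
  have hstrip : Integrable ((Set.Icc (-1 : ℝ) 1).indicator (1 : ℝ → ℝ)) :=
    (integrable_indicator_iff measurableSet_Icc).2 (integrableOn_const (by simp) (by simp))
  have hfar : Integrable
      (fun w : ℝ × ℝ => exp (-(π / 2) * |w.1|) * (Set.Icc (-1 : ℝ) 1).indicator 1 w.2) := by
    rw [Measure.volume_eq_prod]
    exact (integrable_exp_neg_mul_abs (by positivity)).mul_prod hstrip
  exact (integrable_discKernel.const_mul _).add hfar

noncomputable def nearFieldTerm (C y' : ℝ) (w : ℝ × ℝ) : ℝ :=
  if enr w ≤ 1 then C * (y' / enr w) * exp (-(π / 2) * w.1) else 0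

noncomputable def farFieldTerm (C y' t : ℝ) (w : ℝ × ℝ) : ℝ :=
  if 1 ≤ enr w then C * t ^ 2 * y' * exp (-π * |w.1|) * exp (-(π / 2) * w.1) else 0

section FieldTerms

variable {C y' : ℝ} (hC : 0 ≤ C) (hy' : 0 ≤ y')
include hC hy'

lemma nearFieldTerm_nonneg (w : ℝ × ℝ) : 0 ≤ nearFieldTerm C y' w := by
  unfold nearFieldTerm
  split_ifs
  · exact mul_nonneg (mul_nonneg hC (div_nonneg hy' (enr_nonneg _))) (exp_nonneg _)
  · rfl

lemma farFieldTerm_nonneg (t : ℝ) (w : ℝ × ℝ) : 0 ≤ farFieldTerm C y' t w := by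
  unfold farFieldTerm
  split_ifs
  · positivity
  · rfl

lemma nearFieldTerm_le (w : ℝ × ℝ) :
    nearFieldTerm C y' w
      ≤ C * y' * (exp (π / 2) * discKernel w) := by
  unfold nearFieldTerm
  split_ifs with hw
  · have hexp : exp (-(π / 2) * w.1) ≤ exp (π / 2) := by
      have := (neg_le_abs w.1).trans ((abs_fst_le_enr w).trans hw)
      exact exp_le_exp.2 (by nlinarith [pi_pos])
    rw [discKernel, Set.indicator_of_mem (show w ∈ {w : ℝ × ℝ | enr w ≤ 1} from hw),
      div_eq_mul_inv]
    calc C * (y' * (enr w)⁻¹) * exp (-(π / 2) * w.1)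
        ≤ C * (y' * (enr w)⁻¹) * exp (π / 2) := by
          gcongr
          exact mul_nonneg hC (mul_nonneg hy' (inv_nonneg.2 (enr_nonneg _)))
      _ = C * y' * (exp (π / 2) * (enr w)⁻¹) := by ring
  · exact mul_nonneg (mul_nonneg hC hy') (mul_nonneg (exp_nonneg _) (discKernel_nonneg w))

lemma farFieldTerm_le {t : ℝ} (ht : t ∈ Set.Icc (0 : ℝ) 1) (w : ℝ × ℝ) :
    farFieldTerm C y' t w ≤ C * y' * exp (-(π / 2) * |w.1|) := by
  unfold farFieldTerm
  split_ifs
  · have ht2 : t ^ 2 ≤ 1 := pow_le_one₀ ht.1 ht.2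
    have hexp : exp (-π * |w.1|) * exp (-(π / 2) * w.1) ≤ exp (-(π / 2) * |w.1|) := by
      rw [← exp_add]
      exact exp_le_exp.2 (by nlinarith [pi_pos, neg_abs_le w.1])
    calc C * t ^ 2 * y' * exp (-π * |w.1|) * exp (-(π / 2) * w.1)
        = C * y' * (t ^ 2 * (exp (-π * |w.1|) * exp (-(π / 2) * w.1))) := by ring
      _ ≤ C * y' * (1 * exp (-(π / 2) * |w.1|)) := by
          gcongr
      _ = C * y' * exp (-(π / 2) * |w.1|) := by ring
  · positivity

end FieldTerms

lemma nearFieldTerm_add_farFieldTerm_le {C x' y' : ℝ} (hC : 0 ≤ C) (hy' : y' ∈ Set.Icc (0 : ℝ) 1)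
    {z : ℝ × ℝ} (hz : z ∈ channel) :
    nearFieldTerm C y' (z - (x', y')) + farFieldTerm C y' z.2 (z - (x', y'))
      ≤ C * y' * channelMajorant (z - (x', y')) := by
  have hstrip : (z - (x', y')).2 ∈ Set.Icc (-1 : ℝ) 1 := by
    obtain ⟨-, hz0, hz1⟩ := hz
    simp only [Prod.snd_sub, Set.mem_Icc]
    constructor <;> linarith [hy'.1, hy'.2]
  have hfar := farFieldTerm_le hC hy'.1 hz.2 (z - (x', y'))
  rw [channelMajorant, Set.indicator_of_mem hstrip, Pi.one_apply, mul_one, mul_add]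
  exact add_le_add (nearFieldTerm_le hC hy'.1 _) hfar

lemma setIntegral_le_integral_of_le_comp_sub {G : Type*} [MeasurableSpace G] [AddGroup G]
    [MeasurableAdd G] {μ : Measure G} [μ.IsAddRightInvariant] {s : Set G} (hs : MeasurableSet s)
    {f K : G → ℝ} (p : G) (hK : Integrable K μ) (hK0 : 0 ≤ K) (hf0 : 0 ≤ f)
    (hfK : ∀ z ∈ s, f z ≤ K (z - p)) :
    ∫ z in s, f z ∂μ ≤ ∫ w, K w ∂μ :=
  calc ∫ z in s, f z ∂μ ≤ ∫ z in s, K (z - p) ∂μ :=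
        integral_mono_of_nonneg (Filter.Eventually.of_forall hf0)
          (hK.comp_sub_right p).integrableOn (ae_restrict_of_forall_mem hs hfK)
    _ ≤ ∫ z, K (z - p) ∂μ :=
        setIntegral_le_integral (hK.comp_sub_right p)
          (Filter.Eventually.of_forall fun z => hK0 (z - p))
    _ = ∫ w, K w ∂μ := integral_sub_right_eq_self K p

theorem stmt9 (C : ℝ) (hC : 0 < C) :
    ∃ C' : ℝ, 0 < C' ∧
      ∀ x' y' : ℝ, y' ∈ Set.Icc (0:ℝ) (1/2) →
        (∫ z in channel,
          ((if enr (z - (x', y')) ≤ 1 then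
              C * (y' / enr (z - (x', y'))) * Real.exp (-(Real.pi/2) * (z.1 - x'))
            else 0)
          + (if 1 ≤ enr (z - (x', y')) then
              C * z.2 ^ 2 * y' * Real.exp (-Real.pi * |z.1 - x'|) *
                Real.exp (-(Real.pi/2) * (z.1 - x'))
            else 0)))
        ≤ C' * y' := by
  refine ⟨C * max (∫ w, channelMajorant w) 1, by positivity, fun x' y' hy => ?_⟩
  have hy' : y' ∈ Set.Icc (0 : ℝ) 1 := Set.Icc_subset_Icc_right (by norm_num) hy
  calc ∫ z in channel, nearFieldTerm C y' (z - (x', y')) + farFieldTerm C y' z.2 (z - (x', y'))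
      ≤ ∫ w, C * y' * channelMajorant w :=
        setIntegral_le_integral_of_le_comp_sub (MeasurableSet.univ.prod measurableSet_Icc)
          (x', y') (integrable_channelMajorant.const_mul _)
          (fun w => mul_nonneg (mul_nonneg hC.le hy'.1) (channelMajorant_nonneg w))
          (fun z => add_nonneg (nearFieldTerm_nonneg hC.le hy'.1 _)
            (farFieldTerm_nonneg hC.le hy'.1 _ _))
          (fun z hz => nearFieldTerm_add_farFieldTerm_le hC.le hy' hz)
    _ = C * y' * ∫ w, channelMajorant w := integral_const_mul _ _
    _ ≤ C * max (∫ w, channelMajorant w) 1 * y' := by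
        rw [mul_right_comm C]
        gcongr
        · exact hy'.1
        · exact le_max_left _ _
end

section
/- Suppose Φ̄ : Ω × [0,∞) → ℝ is bounded, t ↦ Φ̄(z,t) is differentiable for each z, and there exist ε ∈ (0,1) and a constant c > 0 such that at every point (z,t) where Φ̄(z,t) ≥ (1-ε)·sup_{z'} |Φ̄(z',t)| > 0 one has ∂_t Φ̄(z,t) ≤ -c·sup_{z'}|Φ̄(z',t)|, and symmetrically at every point where Φ̄(z,t) ≤ -(1-ε)·sup_{z'}|Φ̄(z',t)| one has ∂_t Φ̄(z,t) ≥ c·sup_{z'}|Φ̄(z',t)|. Assume further that t ↦ M(t) := sup_z |Φ̄(z,t)| is Lipschitz. Then M(t) ≤ M(0) for all t ≥ 0. -/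
/-!
If `M t > M 0` for some `t ≥ 0`, let `t₀ > 0` be a maximum point of `M` on `[0, t]` and
`S = M t₀ > 0`. On a short interval `[a, t₀]` we have `S / 2 ≤ M ≤ S`, so whenever
`Φ z` rises above `(1 - ε) S` it decreases at rate at least `c S / 2`. Comparing with a line
of slope `-c S / 4` shows `|Φ z t₀| ≤ S - c S (t₀ - a) / 4` for every `z`, contradicting
`M t₀ = S`.
-/


open Set Filter Topology

theorem image_le_sub_mul_of_deriv_lt_neg_above {f f' : ℝ → ℝ} {a b L S δ : ℝ} (hδ : 0 ≤ δ)
    (hf : ∀ x ∈ Icc a b, HasDerivAt f (f' x) x) (hfa : f a ≤ S) (hL : L ≤ S - δ * (b - a))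
    (hd : ∀ x ∈ Ico a b, L ≤ f x → f' x < -δ) :
    ∀ x ∈ Icc a b, f x ≤ S - δ * (x - a) := by
  have hB : ∀ x, HasDerivAt (fun x => S - δ * (x - a)) (-δ) x := fun x => by
    simpa using ((hasDerivAt_id x).sub_const a).const_mul δ |>.const_sub S
  refine image_le_of_deriv_right_lt_deriv_boundary
    (fun x hx => (hf x hx).continuousAt.continuousWithinAt)
    (fun x hx => (hf x (Ico_subset_Icc_self hx)).hasDerivWithinAt) (by simpa using hfa) hB ?_
  intro x hx hfx
  refine hd x hx (hfx ▸ hL.trans ?_)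
  nlinarith [hx.2]

theorem eventually_nhdsLT_forall_Icc {α : Type*} [LinearOrder α] [TopologicalSpace α]
    [OrderTopology α] [NoMinOrder α] {p : α → Prop} {t : α} (h : ∀ᶠ x in 𝓝 t, p x) :
    ∀ᶠ a in 𝓝[<] t, ∀ x ∈ Icc a t, p x := by
  obtain ⟨l, hlt, hl⟩ := exists_Ioc_subset_of_mem_nhds h (exists_lt t)
  filter_upwards [Ioo_mem_nhdsLT hlt] with a ha x hx
  exact hl ⟨ha.1.trans_le hx.1, hx.2⟩

theorem ContinuousAt.exists_Ioo_forall_Icc_lt {g : ℝ → ℝ} {l t r v : ℝ}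
    (hg : ContinuousAt g t) (hv : v < g t) (hl : l < t) (hr : 0 < r) :
    ∃ a ∈ Ioo l t, t - a < r ∧ ∀ x ∈ Icc a t, v < g x := by
  have h : ∀ᶠ a in 𝓝[<] t, a ∈ Ioo l t ∧ t - r < a ∧ ∀ x ∈ Icc a t, v < g x := by
    filter_upwards [Ioo_mem_nhdsLT hl, Ioo_mem_nhdsLT (sub_lt_self t hr),
      eventually_nhdsLT_forall_Icc (continuousAt_const.eventually_lt hg hv)] with a hal hra hga
    exact ⟨hal, hra.1, hga⟩
  obtain ⟨a, hal, hra, hga⟩ := h.exists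
  exact ⟨a, hal, by linarith, hga⟩

theorem le_sub_mul_of_drift {f f' M : ℝ → ℝ} {a b m S ε c : ℝ} (hab : a ≤ b)
    (hf : ∀ x ∈ Icc a b, HasDerivAt f (f' x) x) (hfM : ∀ x ∈ Icc a b, f x ≤ M x)
    (hMm : ∀ x ∈ Icc a b, m ≤ M x) (hMS : ∀ x ∈ Icc a b, M x ≤ S) (hm : 0 < m)
    (hε : ε ≤ 1) (hc : 0 < c) (hsmall : c * m * (b - a) ≤ 2 * ε * S)
    (hdrift : ∀ x ∈ Icc a b, (1 - ε) * M x ≤ f x → f' x ≤ -c * M x) :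
    f b ≤ S - c * m / 2 * (b - a) := by
  have hleft : a ∈ Icc a b := ⟨le_rfl, hab⟩
  refine image_le_sub_mul_of_deriv_lt_neg_above (L := (1 - ε) * S) (by positivity) hf
    ((hfM a hleft).trans (hMS a hleft)) (by linarith) (fun x hx hLf => ?_) b ⟨hab, le_rfl⟩
  have hx' := Ico_subset_Icc_self hx
  have hMx : (1 - ε) * M x ≤ (1 - ε) * S := mul_le_mul_of_nonneg_left (hMS x hx') (by linarith)
  have hcm : c * m ≤ c * M x := mul_le_mul_of_nonneg_left (hMm x hx') hc.le
  linarith [hdrift x hx' (hMx.trans hLf), mul_pos hc hm]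

theorem abs_le_sub_mul_of_drift {Ω : Type*} {Φ dΦ : Ω → ℝ → ℝ} {M : ℝ → ℝ} {a b m S ε c : ℝ}
    (hdiff : ∀ z t, HasDerivAt (Φ z) (dΦ z t) t) (hΦM : ∀ z t, |Φ z t| ≤ M t)
    (ha : 0 ≤ a) (hab : a ≤ b) (hMm : ∀ x ∈ Icc a b, m ≤ M x) (hMS : ∀ x ∈ Icc a b, M x ≤ S)
    (hm : 0 < m) (hε : ε ≤ 1) (hc : 0 < c) (hsmall : c * m * (b - a) ≤ 2 * ε * S)
    (hpos : ∀ z t, 0 ≤ t → 0 < M t → (1 - ε) * M t ≤ Φ z t → dΦ z t ≤ -c * M t)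
    (hneg : ∀ z t, 0 ≤ t → 0 < M t → Φ z t ≤ -((1 - ε) * M t) → c * M t ≤ dΦ z t) (z : Ω) :
    |Φ z b| ≤ S - c * m / 2 * (b - a) := by
  have hMpos : ∀ x ∈ Icc a b, 0 < M x := fun x hx => hm.trans_le (hMm x hx)
  refine abs_le.mpr ⟨?_, ?_⟩
  · have := le_sub_mul_of_drift (f := fun t => -Φ z t) (f' := fun t => -dΦ z t) hab
      (fun x _ => (hdiff z x).neg) (fun x _ => (neg_le_abs _).trans (hΦM z x)) hMm hMS hm hε hc
      hsmall fun x hx h => by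
        linarith [hneg z x (ha.trans hx.1) (hMpos x hx) (by linarith)]
    linarith
  · exact le_sub_mul_of_drift hab (fun x _ => hdiff z x) (fun x _ => (le_abs_self _).trans (hΦM z x))
      hMm hMS hm hε hc hsmall fun x hx => hpos z x (ha.trans hx.1) (hMpos x hx)

theorem stmt18_general {Ω : Type*}
    (Φ : Ω → ℝ → ℝ) (dΦ : Ω → ℝ → ℝ) (M : ℝ → ℝ)
    (B : ℝ) (hbound : ∀ z t, |Φ z t| ≤ B)
    (hdiff : ∀ z t, HasDerivAt (Φ z) (dΦ z t) t)
    (hMdef : ∀ t, M t = ⨆ z, |Φ z t|)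
    (ε c : ℝ) (hε0 : 0 < ε) (hε1 : ε < 1) (hc : 0 < c)
    (hpos : ∀ z t, 0 ≤ t → 0 < M t → (1 - ε) * M t ≤ Φ z t → dΦ z t ≤ -c * M t)
    (hneg : ∀ z t, 0 ≤ t → 0 < M t → Φ z t ≤ -((1 - ε) * M t) → c * M t ≤ dΦ z t)
    (K : NNReal) (hLip : LipschitzWith K M) :
    ∀ t : ℝ, 0 ≤ t → M t ≤ M 0 := by
  intro T hT
  by_contra! hlt
  have hΦM : ∀ z t, |Φ z t| ≤ M t := fun z t =>
    hMdef t ▸ le_ciSup ⟨B, by rintro _ ⟨z', rfl⟩; exact hbound z' t⟩ z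
  have hM0 : 0 ≤ M 0 := hMdef 0 ▸ Real.iSup_nonneg fun z => abs_nonneg _
  obtain ⟨t₀, ⟨ht₀0, ht₀T⟩, hmax⟩ :=
    isCompact_Icc.exists_isMaxOn (nonempty_Icc.mpr hT) hLip.continuous.continuousOn
  set S := M t₀
  have hS : M 0 < S := hlt.trans_le (hmax ⟨hT, le_rfl⟩)
  have ht₀ : 0 < t₀ := ht₀0.lt_of_ne (by rintro rfl; exact hS.false)
  have hS0 : 0 < S := hM0.trans_lt hS
  obtain ⟨a, ⟨ha0, hat₀⟩, hshort, hMa⟩ := hLip.continuous.continuousAt.exists_Ioo_forall_Icc_lt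
    (half_lt_self hS0) ht₀ (div_pos (mul_pos four_pos hε0) hc)
  have hsmall : c * (t₀ - a) < 4 * ε := by rwa [lt_div_iff₀ hc, mul_comm] at hshort
  have hΦt₀ : ∀ z, |Φ z t₀| ≤ S - c * (S / 2) / 2 * (t₀ - a) := by
    refine abs_le_sub_mul_of_drift hdiff hΦM ha0.le hat₀.le (fun x hx => (hMa x hx).le)
      (fun x hx => hmax ⟨ha0.le.trans hx.1, hx.2.trans ht₀T⟩) (by linarith) hε1.le hc ?_ hpos hneg
    nlinarith
  have hdrop : 0 < c * (S / 2) / 2 * (t₀ - a) := by have := sub_pos.mpr hat₀; positivity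
  have : S ≤ S - c * (S / 2) / 2 * (t₀ - a) :=
    (hMdef t₀).trans_le (Real.iSup_le hΦt₀ (by nlinarith))
  linarith

theorem stmt18 {Ω : Type*} [Nonempty Ω]
    (Φ : Ω → ℝ → ℝ) (dΦ : Ω → ℝ → ℝ) (M : ℝ → ℝ)
    (B : ℝ) (hbound : ∀ z t, |Φ z t| ≤ B)
    (hdiff : ∀ z t, HasDerivAt (Φ z) (dΦ z t) t)
    (hMdef : ∀ t, M t = ⨆ z, |Φ z t|)
    (ε c : ℝ) (hε0 : 0 < ε) (hε1 : ε < 1) (hc : 0 < c)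
    (hpos : ∀ z t, 0 ≤ t → 0 < M t → (1 - ε) * M t ≤ Φ z t → dΦ z t ≤ -c * M t)
    (hneg : ∀ z t, 0 ≤ t → 0 < M t → Φ z t ≤ -((1 - ε) * M t) → c * M t ≤ dΦ z t)
    (K : NNReal) (hLip : LipschitzWith K M) :
    ∀ t : ℝ, 0 ≤ t → M t ≤ M 0 :=
  stmt18_general Φ dΦ M B hbound hdiff hMdef ε c hε0 hε1 hc hpos hneg K hLip
end
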